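/- If x and y are conjugate words (i.e., x = uv and y = vu for some words u, v) over integers, then the cyclic semi-regular continuant K̇^∘(x) equals K̇^∘(y), where K̇^∘(x_1 x_2 ... x_n) = K̇(x_1...x_n) − K̇(x_2...x_{n-1}). -/

import Mathlib

/-- Semi-regular continuant read from the last element: helper on the reversed list. -/
def contKsf {R : Type*} [Ring R] : List R → R
  | [] => 1
  | [a] => a
  | a :: b :: l => a * contKsf (b :: l) - contKsf l

/-- Semi-regular continuant `K̇`. -/
def contKs {R : Type*} [Ring R] (l : List R) : R := contKsf l.reverse

/-- Cyclic semi-regular continuant: `K̇∘(x₁…xₙ) = K̇(x₁…xₙ) − K̇(x₂…xₙ₋₁)`. -/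
def cycKs {R : Type*} [Ring R] (l : List R) : R := contKs l - contKs l.tail.dropLast

/-!
Writing `M x = !![x, -1; 1, 0]`, the product `M x₁ * ⋯ * M xₙ` (for `n ≥ 2`) is
`!![K̇(x₁…xₙ), -K̇(x₁…xₙ₋₁); K̇(x₂…xₙ), -K̇(x₂…xₙ₋₁)]`, because right multiplication by `M x`
implements the recurrence of `K̇`. Hence `K̇∘(x)` is the trace of this product, and the trace is
invariant under the cyclic shift `M(u) M(v) ↦ M(v) M(u)`.
-/

theorem contKs_append_singleton {R : Type*} [Ring R] {l : List R} (hl : l ≠ []) (x : R) :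
    contKs (l ++ [x]) = x * contKs l - contKs l.dropLast := by
  obtain ⟨init, y, rfl⟩ := List.eq_nil_or_concat l |>.resolve_left hl
  simp [contKs, contKsf]

def contKsMatrix {R : Type*} [Ring R] (x : R) : Matrix (Fin 2) (Fin 2) R := !![x, -1; 1, 0]

section
variable {R : Type*} [CommRing R]

theorem prod_map_contKsMatrix {l : List R} (hl : 2 ≤ l.length) :
    (l.map contKsMatrix).prod =
      !![contKs l, -contKs l.dropLast; contKs l.tail, -contKs l.tail.dropLast] := by
  induction l using List.reverseRecOn with
  | nil => simp at hl
  | append_singleton l x ih =>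
    have hl0 : l ≠ [] := by rintro rfl; simp at hl
    rw [List.map_append, List.prod_append, List.map_singleton, List.prod_singleton,
      contKs_append_singleton hl0, List.tail_append_of_ne_nil hl0, List.dropLast_concat]
    obtain ⟨a, rfl⟩ | hl1 : (∃ a, l = [a]) ∨ 2 ≤ l.length := by
      match l, hl0 with
      | [a], _ => exact .inl ⟨a, rfl⟩
      | _ :: _ :: _, _ => exact .inr (by simp)
    · simp [contKsMatrix, contKs, contKsf]
      ring
    · have hl2 : l.tail ≠ [] := by rw [← List.length_pos_iff, List.length_tail]; omega
      rw [ih hl1, contKs_append_singleton hl2, List.dropLast_concat, contKsMatrix,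
        Matrix.mul_fin_two]
      ring_nf

theorem cycKs_eq_trace_prod_map_contKsMatrix {l : List R} (hl : 2 ≤ l.length) :
    cycKs l = (l.map contKsMatrix).prod.trace := by
  rw [prod_map_contKsMatrix hl, Matrix.trace_fin_two_of, cycKs, sub_eq_add_neg]

theorem cycKs_append_comm (u v : List R) : cycKs (u ++ v) = cycKs (v ++ u) := by
  rcases u with _ | ⟨a, u⟩
  · simp
  rcases v with _ | ⟨b, v⟩
  · simp
  have huv : 2 ≤ (a :: u ++ b :: v).length := by simp; omega
  have hvu : 2 ≤ (b :: v ++ a :: u).length := by simp; omega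
  rw [cycKs_eq_trace_prod_map_contKsMatrix huv, cycKs_eq_trace_prod_map_contKsMatrix hvu,
    List.map_append, List.map_append, List.prod_append, List.prod_append, Matrix.trace_mul_comm]

end

theorem stmt5_general (u v : List ℤ) :
    cycKs (u ++ v) = cycKs (v ++ u) :=
  cycKs_append_comm u v

theorem stmt5 (u v : List ℤ) (hlen : 2 ≤ (u ++ v).length) :
    cycKs (u ++ v) = cycKs (v ++ u) :=
  stmt5_general u v
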